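/- arXiv:1603.02100 — 2 statements merged into one kernel-verified Lean document; each statement's English description precedes it below -/
import Mathlib

section
/- (1) If α <₂ β, then β is a limit multiple of ρ (β = ρ·λ for some limit ordinal λ) and the set {γ < α : γ <₁ α} is cofinal in α (for every γ' < α there is γ with γ' < γ < α and γ <₁ α). (2) If α <₂ β <₂ γ, then the set {δ < γ : α <₂ δ} is cofinal in γ. -/
open Ordinal Set

/-- `ρ` is additively indecomposable: nonzero and closed under addition. -/
def AddIndec (ρ : Ordinal) : Prop :=
  ρ ≠ 0 ∧ ∀ ξ < ρ, ∀ η < ρ, ξ + η < ρ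

/-- `σ` is divisible by `ρ`, i.e. of the form `ρ·ζ`. -/
def DivBy (ρ σ : Ordinal) : Prop := ∃ ζ : Ordinal, σ = ρ * ζ

/-- The function `f_ξ` of the structure `R^ρ`. -/
noncomputable def fApp (ρ ξ α : Ordinal) : Ordinal :=
  if α % ρ = 0 then α + ξ else ρ * (α / ρ)

/-- A set of ordinals is closed (with respect to `R^ρ`). -/
def RClosed (ρ : Ordinal) (X : Set Ordinal) : Prop :=
  ∀ σ ξ : Ordinal, DivBy ρ σ → ξ < ρ → σ + ξ ∈ X → σ ∈ X

/-- `h` is an embedding of `X` (as a substructure of `R^ρ`) into `R^ρ`. -/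
def IsEmbed (ρ : Ordinal) (X : Set Ordinal) (h : Ordinal → Ordinal) : Prop :=
  (∀ α ∈ X, ∀ β ∈ X, α < β → h α < h β) ∧
  (∀ α ∈ X, ∀ β ∈ X, ∀ ξ, ξ < ρ → (fApp ρ ξ α = β ↔ fApp ρ ξ (h α) = h β))

/-- `Y` is a covering of `Z` (relative to relations `le1`, `le2`). -/
def IsCovering (ρ : Ordinal) (le1 le2 : Ordinal → Ordinal → Prop)
    (Z Y : Set Ordinal) : Prop :=
  ∃ h : Ordinal → Ordinal, IsEmbed ρ Z h ∧
    (∀ σ ∈ Z, ∀ τ ∈ Z, (le1 σ τ → le1 (h σ) (h τ)) ∧ (le2 σ τ → le2 (h σ) (h τ))) ∧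
    h '' Z = Y

/-- The `i`-th element of a finite set of ordinals, in increasing order. -/
noncomputable def nth (Y : Finset Ordinal) (i : ℕ) : Ordinal :=
  (Y.sort (· ≤ ·)).getD i 0

/-- There are cofinally many finite sets `Ỹ` below `α` with property `P`. -/
def Cofinally (α : Ordinal) (P : Finset Ordinal → Prop) : Prop :=
  ∀ α' < α, ∃ Yt : Finset Ordinal, (∀ y ∈ Yt, α' < y ∧ y < α) ∧ P Yt

/-- The defining condition for `α ≤₁ β`. -/
def Le1Def (ρ : Ordinal) (le1 le2 : Ordinal → Ordinal → Prop) (α β : Ordinal) : Prop :=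
  α ≤ β ∧
  ∀ X Y : Finset Ordinal, (∀ x ∈ X, x < α) → (∀ y ∈ Y, α ≤ y ∧ y < β) →
    RClosed ρ (↑(X ∪ Y) : Set Ordinal) →
    ∃ Yt : Finset Ordinal, (∀ y ∈ Yt, y < α) ∧ (∀ x ∈ X, ∀ y ∈ Yt, x < y) ∧
      IsCovering ρ le1 le2 (↑(X ∪ Y) : Set Ordinal) (↑(X ∪ Yt) : Set Ordinal)

/-- The defining condition for `α ≤₂ β`. -/
def Le2Def (ρ : Ordinal) (le1 le2 : Ordinal → Ordinal → Prop) (α β : Ordinal) : Prop :=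
  α ≤ β ∧
  (∀ X Y : Finset Ordinal, (∀ x ∈ X, x < α) → (∀ y ∈ Y, y < α) →
    RClosed ρ (↑X : Set Ordinal) → RClosed ρ (↑Y : Set Ordinal) →
    (∀ x ∈ X, ∀ y ∈ Y, x < y) →
    Cofinally α (fun Yt => IsCovering ρ le1 le2 (↑(X ∪ Y) : Set Ordinal) (↑(X ∪ Yt) : Set Ordinal)) →
    Cofinally β (fun Yt => IsCovering ρ le1 le2 (↑(X ∪ Y) : Set Ordinal) (↑(X ∪ Yt) : Set Ordinal))) ∧
  (∀ X Y : Finset Ordinal, (∀ x ∈ X, x < α) → (∀ y ∈ Y, α ≤ y ∧ y < β) →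
    RClosed ρ (↑(X ∪ Y) : Set Ordinal) →
    ∃ Yt : Finset Ordinal, (∀ y ∈ Yt, y < α) ∧ (∀ x ∈ X, ∀ y ∈ Yt, x < y) ∧
      IsCovering ρ le1 le2 (↑(X ∪ Y) : Set Ordinal) (↑(X ∪ Yt) : Set Ordinal) ∧
      ∀ i : ℕ, i < Y.card → le1 (nth Y i) β → le1 (nth Yt i) α)

/-- `le1`, `le2` satisfy the recursive definitions of `≤₁` and `≤₂` of `R₂^ρ`. -/
def R2System (ρ : Ordinal) (le1 le2 : Ordinal → Ordinal → Prop) : Prop :=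
  (∀ α β, le1 α β ↔ Le1Def ρ le1 le2 α β) ∧
  (∀ α β, le2 α β ↔ Le2Def ρ le1 le2 α β)

/-- Isomorphism of two classes of ordinals as substructures of `R₂^ρ`. -/
def OrdIso (ρ : Ordinal) (le1 le2 : Ordinal → Ordinal → Prop) (A B : Set Ordinal) : Prop :=
  ∃ g : Ordinal → Ordinal, Set.BijOn g A B ∧
    (∀ σ ∈ A, ∀ τ ∈ A, (σ < τ ↔ g σ < g τ)) ∧
    (∀ σ ∈ A, ∀ τ ∈ A, ∀ ξ, ξ < ρ → (fApp ρ ξ σ = τ ↔ fApp ρ ξ (g σ) = g τ)) ∧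
    (∀ σ ∈ A, ∀ τ ∈ A, (le1 σ τ ↔ le1 (g σ) (g τ)) ∧ (le2 σ τ ↔ le2 (g σ) (g τ)))

/-- `κ` is `≤₁`-minimal. -/
def Min1 (le1 : Ordinal → Ordinal → Prop) (κ : Ordinal) : Prop :=
  ∀ ξ < κ, ¬ le1 ξ κ

/-- `(dom, f)` is the increasing enumeration of the class `S` of ordinals:
`dom` is a downward-closed class of indices and `f` restricted to `dom` is the
order isomorphism onto `S`. -/
def Enumerates (S : Set Ordinal) (dom : Ordinal → Prop) (f : Ordinal → Ordinal) : Prop :=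
  (∀ a b : Ordinal, dom a → b < a → dom b) ∧
  (∀ a b : Ordinal, dom b → a < b → f a < f b) ∧
  (∀ a : Ordinal, dom a → f a ∈ S) ∧
  (∀ x ∈ S, ∃ a, dom a ∧ f a = x)

/-- `l` is a limit point of the class `C` of ordinals. -/
def LimPt (C : Set Ordinal) (l : Ordinal) : Prop :=
  l ≠ 0 ∧ ∀ γ < l, ∃ δ ∈ C, γ < δ ∧ δ < l

/-- The class `C` of ordinals is topologically closed. -/
def TopClosed (C : Set Ordinal) : Prop := ∀ l, LimPt C l → l ∈ C

/-- The class `C` of ordinals is an interval. -/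
def IsInterval (C : Set Ordinal) : Prop :=
  ∀ σ τ υ : Ordinal, σ ∈ C → υ ∈ C → σ ≤ τ → τ ≤ υ → τ ∈ C

open Classical in
/-- The closure `J̄_ξ` of the `ξ`-th component of `I_α` with respect to `≤₂`,
given the enumeration `(dom₂, ν)` of the `≤₂`-minimal multiples of `κ_α` in `I_α`. -/
noncomputable def Jbar (le1 : Ordinal → Ordinal → Prop) (κα : Ordinal)
    (dom₂ : Ordinal → Prop) (ν : Ordinal → Ordinal) (ξ : Ordinal) : Set Ordinal :=
  if dom₂ (ξ + 1) then Set.Icc (ν ξ) (ν (ξ + 1))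
  else {δ | le1 κα δ} ∩ Set.Ici (ν ξ)

/-!
Everything comes from clause (ii) of `α ≤₂ β` applied to a single new point `t ∈ [α, β)`: the
covering it provides fixes the old points `X < α`, sends `t` to some `c ∈ (X, α)`, and preserves
the functions `f_ξ` and the relations `≤₁`, `≤₂`.

(1) Take `t = α`. If `σ < α ≤ σ + ρ` for a multiple `σ` of `ρ`, then with `X = {σ}` the image is
`c = σ + ξ = f_ξ(σ)` for some `ξ < ρ`, so `f_ξ(σ) = α`, which is absurd; hence the multiples of
`ρ` are cofinal in `α`. With `γ' ∈ X` we get `c ∈ (γ', α)`, and `c ≤₁ α` because `α ≤₁ β`.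
Clause (i) for `X = ∅`, `Y = {0}` carries the cofinality of multiples of `ρ` from `α` up to `β`.

(2) Reflecting `t = β` along `β ≤₂ γ` with `X = {α, x}` sends `β` to some `δ > x` with `α ≤₂ δ`,
so such multiples `δ` of `ρ` are cofinal in `β`. Clause (i) of `β ≤₂ γ` for `X = {α}` and
`Y = {δ}` then makes them cofinal in `γ`.
-/

section Arithmetic

variable {ρ α β ξ : Ordinal}

theorem fApp_of_dvd (h : ρ ∣ α) : fApp ρ ξ α = α + ξ :=
  if_pos (mod_eq_zero_of_dvd h)

theorem fApp_zero_eq_self_iff : fApp ρ 0 α = α ↔ ρ ∣ α := by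
  rw [dvd_iff_mod_eq_zero, fApp]
  split_ifs with h
  · simp [h]
  · exact iff_of_false (fun he => h (by rw [mod_def, he, sub_self])) h

theorem add_lt_of_dvd_of_lt (hα : ρ ∣ α) (hβ : ρ ∣ β) (hαβ : α < β) (hξ : ξ < ρ) :
    α + ξ < β := by
  obtain ⟨a, rfl⟩ := hα
  obtain ⟨b, rfl⟩ := hβ
  have hρ : 0 < ρ := pos_of_gt hξ
  calc ρ * a + ξ < ρ * a + ρ := (add_lt_add_iff_left _).2 hξ
    _ = ρ * Order.succ a := (mul_succ ρ a).symm
    _ ≤ ρ * b := mul_le_mul_right (Order.succ_le_of_lt ((mul_lt_mul_iff_of_pos_left hρ).1 hαβ)) ρ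

theorem fApp_eq_iff_of_dvd (hα : ρ ∣ α) (hβ : ρ ∣ β) (hξ : ξ < ρ) :
    fApp ρ ξ α = β ↔ ξ = 0 ∧ α = β := by
  rw [fApp_of_dvd hα]
  refine ⟨fun h => ?_, fun ⟨hξ0, hαβ⟩ => by rw [hξ0, hαβ, add_zero]⟩
  rcases lt_trichotomy α β with hlt | rfl | hgt
  · exact absurd h (add_lt_of_dvd_of_lt hα hβ hlt hξ).ne
  · exact ⟨add_eq_left.1 h, rfl⟩
  · exact absurd h (hgt.trans_le le_self_add).ne'

theorem isEmbed_of_dvd {Z : Set Ordinal} {h : Ordinal → Ordinal} (hZ : ∀ z ∈ Z, ρ ∣ z)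
    (hhZ : ∀ z ∈ Z, ρ ∣ h z) (hmono : StrictMonoOn h Z) : IsEmbed ρ Z h :=
  ⟨fun _ hα _ hβ => hmono hα hβ, fun α hα β hβ _ hξ => by
    rw [fApp_eq_iff_of_dvd (hZ α hα) (hZ β hβ) hξ, fApp_eq_iff_of_dvd (hhZ α hα) (hhZ β hβ) hξ,
      hmono.injOn.eq_iff hα hβ]⟩

theorem rclosed_of_forall_dvd_or_floor_mem (hρ : ρ ≠ 0) {s : Set Ordinal}
    (hs : ∀ a ∈ s, ρ ∣ a ∨ ρ * (a / ρ) ∈ s) : RClosed ρ s := by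
  rintro _ ξ ⟨ζ, rfl⟩ hξ hmem
  rcases hs _ hmem with hdvd | hfloor
  · have hξ0 : ξ = 0 := by
      rwa [dvd_iff_mod_eq_zero, mul_add_mod_self, mod_eq_of_lt hξ] at hdvd
    rwa [hξ0, add_zero] at hmem
  · rwa [mul_add_div ζ hρ, div_eq_zero_of_lt hξ, add_zero] at hfloor

theorem rclosed_of_forall_dvd (hρ : ρ ≠ 0) {s : Set Ordinal} (hs : ∀ a ∈ s, ρ ∣ a) :
    RClosed ρ s :=
  rclosed_of_forall_dvd_or_floor_mem hρ fun a ha => Or.inl (hs a ha)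

def IsLimitMul (ρ a : Ordinal) : Prop :=
  ∃ l, a = ρ * l ∧ Order.IsSuccLimit l

theorem IsLimitMul.dvd {a : Ordinal} (h : IsLimitMul ρ a) : ρ ∣ a :=
  let ⟨l, hl, _⟩ := h; ⟨l, hl⟩

theorem IsLimitMul.exists_dvd_between (hρ : ρ ≠ 0) {a a' : Ordinal} (h : IsLimitMul ρ a)
    (ha' : a' < a) : ∃ σ, a' < σ ∧ σ < a ∧ ρ ∣ σ := by
  obtain ⟨l, rfl, hl⟩ := h
  refine ⟨ρ * Order.succ (a' / ρ), lt_mul_succ_div a' hρ, ?_, dvd_mul_right _ _⟩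
  exact (mul_lt_mul_iff_of_pos_left (pos_iff_ne_zero.2 hρ)).2
    (hl.succ_lt ((lt_mul_iff_div_lt hρ).1 ha'))

theorem isLimitMul_of_exists_dvd_between (hρ : ρ ≠ 0) {a : Ordinal} (ha : a ≠ 0)
    (h : ∀ a' < a, ∃ σ, a' < σ ∧ σ < a ∧ ρ ∣ σ) : IsLimitMul ρ a := by
  have hρpos : 0 < ρ := pos_iff_ne_zero.2 hρ
  have hunbounded : ∀ ζ, ρ * ζ < a → ∃ η, ζ < η ∧ ρ * η < a := by
    intro ζ hζ
    obtain ⟨_, hlt, hσa, η, rfl⟩ := h _ hζ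
    exact ⟨η, (mul_lt_mul_iff_of_pos_left hρpos).1 hlt, hσa⟩
  have ha_eq : a = ρ * (a / ρ) := by
    refine ((mul_div_le a ρ).lt_or_eq.resolve_left fun hlt => ?_).symm
    obtain ⟨η, hη, hηa⟩ := hunbounded _ hlt
    exact hη.not_ge ((mul_le_iff_le_div hρ).1 hηa.le)
  refine ⟨a / ρ, ha_eq, isSuccLimit_iff.2 ⟨fun h0 => ha (by rw [ha_eq, h0, mul_zero]), ?_⟩⟩
  refine Order.isSuccPrelimit_iff_succ_lt.2 fun ζ hζ => ?_
  have hζa : ρ * ζ < a := by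
    rw [ha_eq]; exact (mul_lt_mul_iff_of_pos_left hρpos).2 hζ
  obtain ⟨η, hζη, hηa⟩ := hunbounded ζ hζa
  rw [ha_eq] at hηa
  exact (Order.succ_le_of_lt hζη).trans_lt ((mul_lt_mul_iff_of_pos_left hρpos).1 hηa)

end Arithmetic

section LinearOrder

variable {α : Type*} [LinearOrder α]

theorem Finset.eqOn_id_of_strictMonoOn_of_mapsTo {s : Finset α} {f : α → α}
    (hf : StrictMonoOn f s) (hs : MapsTo f s s) : EqOn f id s := by
  have hcomp : f ∘ s.orderEmbOfFin rfl = s.orderEmbOfFin rfl :=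
    s.orderEmbOfFin_unique rfl (fun i => hs (s.orderEmbOfFin_mem rfl i))
      (fun _ _ hij => hf (s.orderEmbOfFin_mem rfl _) (s.orderEmbOfFin_mem rfl _)
        ((s.orderEmbOfFin rfl).strictMono hij))
  intro x hx
  obtain ⟨i, rfl⟩ : x ∈ Set.range (s.orderEmbOfFin rfl) := by
    rwa [Finset.range_orderEmbOfFin]
  exact congrFun hcomp i

theorem Finset.eq_singleton_and_eqOn_id_of_image_union_singleton {X Yt : Finset α} {t : α}
    {h : α → α} (hXt : ∀ x ∈ X, x < t) (hXYt : ∀ x ∈ X, ∀ y ∈ Yt, x < y)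
    (hmono : StrictMonoOn h ↑(X ∪ {t})) (himg : h '' ↑(X ∪ {t}) = ↑(X ∪ Yt)) :
    Yt = {h t} ∧ EqOn h id X := by
  classical
  have himgF : (X ∪ {t}).image h = X ∪ Yt := by exact_mod_cast himg
  have hcard : Yt.card = 1 := by
    have h1 := Finset.card_image_of_injOn hmono.injOn
    rw [himgF, Finset.card_union_of_disjoint
        (Finset.disjoint_left.2 fun x hx hxY => (hXYt x hx x hxY).false),
      Finset.card_union_of_disjoint
        (Finset.disjoint_singleton_right.2 fun ht => (hXt t ht).false),
      Finset.card_singleton] at h1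
    omega
  obtain ⟨c, rfl⟩ := Finset.card_eq_one.1 hcard
  have hmem : ∀ s ∈ X ∪ {t}, h s ∈ X ∪ {c} := fun s hs => himgF ▸ Finset.mem_image_of_mem h hs
  have htmem : t ∈ X ∪ {t} := by simp
  have hht : h t = c := by
    obtain ⟨s, hs, hsc⟩ := Finset.mem_image.1 (himgF ▸ (by simp : c ∈ X ∪ {c}))
    have hst : s ≤ t := by
      rcases Finset.mem_union.1 hs with hs | hs
      · exact (hXt s hs).le
      · exact (Finset.mem_singleton.1 hs).le
    have hch : c ≤ h t := hsc ▸ (hmono.le_iff_le hs htmem).2 hst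
    rcases Finset.mem_union.1 (hmem t htmem) with hX | hc
    · exact absurd hch (hXYt _ hX c (Finset.mem_singleton_self c)).not_ge
    · exact Finset.mem_singleton.1 hc
  refine ⟨by rw [hht], Finset.eqOn_id_of_strictMonoOn_of_mapsTo
    (hmono.mono (by simp)) fun x hx => ?_⟩
  have hxmem : x ∈ X ∪ {t} := Finset.mem_union_left _ hx
  have hlt : h x < c := hht ▸ hmono hxmem htmem (hXt x hx)
  rcases Finset.mem_union.1 (hmem x hxmem) with hX | hc
  · exact hX
  · exact absurd (Finset.mem_singleton.1 hc) hlt.ne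

end LinearOrder

theorem isCovering_self {ρ : Ordinal} {le1 le2 : Ordinal → Ordinal → Prop} {Z : Set Ordinal} :
    IsCovering ρ le1 le2 Z Z :=
  ⟨id, ⟨fun _ _ _ _ h => h, fun _ _ _ _ _ _ => Iff.rfl⟩, fun _ _ _ _ => ⟨id, id⟩, image_id Z⟩

namespace R2System

variable {ρ : Ordinal} {le1 le2 : Ordinal → Ordinal → Prop}

theorem le_of_le1 (hsys : R2System ρ le1 le2) {a b : Ordinal} (h : le1 a b) : a ≤ b :=
  ((hsys.1 a b).1 h).1

theorem le_of_le2 (hsys : R2System ρ le1 le2) {a b : Ordinal} (h : le2 a b) : a ≤ b :=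
  ((hsys.2 a b).1 h).1

theorem le1_refl (hsys : R2System ρ le1 le2) (a : Ordinal) : le1 a a := by
  refine (hsys.1 a a).2 ⟨le_rfl, fun X Y _ hY _ => ?_⟩
  obtain rfl : Y = ∅ := Finset.eq_empty_of_forall_notMem fun y hy => (hY y hy).2.not_ge (hY y hy).1
  exact ⟨∅, by simp, by simp, isCovering_self⟩

theorem le2_refl (hsys : R2System ρ le1 le2) (a : Ordinal) : le2 a a := by
  refine (hsys.2 a a).2 ⟨le_rfl, fun _ _ _ _ _ _ _ h => h, fun X Y _ hY _ => ?_⟩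
  obtain rfl : Y = ∅ := Finset.eq_empty_of_forall_notMem fun y hy => (hY y hy).2.not_ge (hY y hy).1
  exact ⟨∅, by simp, by simp, isCovering_self, by simp⟩

theorem le1_of_le2 (hsys : R2System ρ le1 le2) {a b : Ordinal} (h : le2 a b) : le1 a b := by
  obtain ⟨hle, -, hreflect⟩ := (hsys.2 a b).1 h
  refine (hsys.1 a b).2 ⟨hle, fun X Y hX hY hcl => ?_⟩
  obtain ⟨Yt, hYt, hXYt, hcov, -⟩ := hreflect X Y hX hY hcl
  exact ⟨Yt, hYt, hXYt, hcov⟩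

theorem isCovering_singleton (hsys : R2System ρ le1 le2) {u v : Ordinal} (hu : ρ ∣ u)
    (hv : ρ ∣ v) :
    IsCovering ρ le1 le2 ↑({u} : Finset Ordinal) ↑({v} : Finset Ordinal) := by
  refine ⟨fun _ => v, isEmbed_of_dvd ?_ ?_ ?_, fun _ _ _ _ => ⟨fun _ => hsys.le1_refl v,
    fun _ => hsys.le2_refl v⟩, by simp⟩
  · simpa using hu
  · simpa using hv
  · simp

theorem isCovering_pair (hsys : R2System ρ le1 le2) {a y d : Ordinal} (ha : ρ ∣ a) (hy : ρ ∣ y)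
    (hd : ρ ∣ d) (hay : a < y) (had : a < d) (h2 : le2 a d) :
    IsCovering ρ le1 le2 ↑(({a} : Finset Ordinal) ∪ {y}) ↑(({a} : Finset Ordinal) ∪ {d}) := by
  have hya : y ≠ a := hay.ne'
  have hpair : (↑(({a} : Finset Ordinal) ∪ {y}) : Set Ordinal) = {a, y} := by simp
  refine ⟨fun t => if t = a then a else d, isEmbed_of_dvd ?_ ?_ ?_, ?_, ?_⟩ <;>
    simp only [hpair, forall_mem_insert, forall_eq, mem_singleton_iff]
  · exact ⟨ha, hy⟩
  · simp [ha, hd, hya]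
  · rintro _ (rfl | rfl) _ (rfl | rfl) hστ <;> simp_all [hay.not_gt]
  · simp only [if_true, hya, if_false]
    exact ⟨⟨⟨id, id⟩, fun _ => hsys.le1_of_le2 h2, fun _ => h2⟩,
      ⟨fun h => absurd (hsys.le_of_le1 h) hay.not_ge,
        fun h => absurd (hsys.le_of_le2 h) hay.not_ge⟩,
      fun _ => hsys.le1_refl d, fun _ => hsys.le2_refl d⟩
  · simp [image_insert_eq, hya]

theorem exists_reflection (hsys : R2System ρ le1 le2) {a b t : Ordinal} (hab : le2 a b)
    {X : Finset Ordinal} (hX : ∀ x ∈ X, x < a) (hat : a ≤ t) (htb : t < b)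
    (hcl : RClosed ρ ↑(X ∪ {t})) :
    ∃ c h, c < a ∧ (∀ x ∈ X, x < c) ∧ IsEmbed ρ ↑(X ∪ {t}) h ∧
      (∀ σ ∈ (↑(X ∪ {t}) : Set Ordinal), ∀ τ ∈ (↑(X ∪ {t}) : Set Ordinal),
        (le1 σ τ → le1 (h σ) (h τ)) ∧ (le2 σ τ → le2 (h σ) (h τ))) ∧
      EqOn h id X ∧ h t = c ∧ (le1 t b → le1 c a) := by
  obtain ⟨-, -, hreflect⟩ := (hsys.2 a b).1 hab
  obtain ⟨Yt, hYta, hXYt, ⟨h, hemb, hpres, himg⟩, hnth⟩ := hreflect X {t} hX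
    (by simpa using ⟨hat, htb⟩) hcl
  obtain ⟨rfl, hfix⟩ := Finset.eq_singleton_and_eqOn_id_of_image_union_singleton
    (fun x hx => (hX x hx).trans_le hat) hXYt (fun _ hσ _ hτ => hemb.1 _ hσ _ hτ) himg
  refine ⟨h t, h, hYta _ (Finset.mem_singleton_self _),
    fun x hx => hXYt x hx _ (Finset.mem_singleton_self _), hemb, hpres, hfix, rfl, fun h1 => ?_⟩
  simpa [nth] using hnth 0 (by simp) (by simpa [nth] using h1)

theorem ne_zero_of_lt2 (hsys : R2System ρ le1 le2) (hρ : ρ ≠ 0) {a b : Ordinal}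
    (hab : le2 a b) (hlt : a < b) : a ≠ 0 := by
  rintro rfl
  obtain ⟨c, -, hc, -⟩ := hsys.exists_reflection hab (X := ∅) (by simp) le_rfl hlt
    (rclosed_of_forall_dvd hρ (by simp))
  exact not_lt_zero hc

theorem add_lt_of_lt2 (hsys : R2System ρ le1 le2) (hρ : ρ ≠ 0) {a b σ : Ordinal}
    (hab : le2 a b) (hlt : a < b) (hσ : ρ ∣ σ) (hσa : σ < a) : σ + ρ < a := by
  by_contra! haσ
  have hcl : RClosed ρ ↑(({σ} : Finset Ordinal) ∪ {a}) := by
    refine rclosed_of_forall_dvd_or_floor_mem hρ fun z hz => ?_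
    simp only [Finset.coe_union, Finset.coe_singleton, mem_union, mem_singleton_iff] at hz ⊢
    rcases hz with rfl | rfl
    · exact Or.inl hσ
    by_cases hdvd : ρ ∣ z
    · exact Or.inl hdvd
    obtain ⟨ζ, rfl⟩ := hσ
    have hz_lt : z < ρ * Order.succ ζ := by
      rw [mul_succ]
      exact haσ.lt_of_ne fun he => hdvd (he ▸ dvd_add (dvd_mul_right ρ ζ) dvd_rfl)
    refine Or.inr (Or.inl (congrArg (ρ * ·) (le_antisymm ?_ ?_)))
    · exact (Ordinal.div_le hρ).2 hz_lt
    · exact (mul_le_iff_le_div hρ).1 hσa.le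
  obtain ⟨c, h, hca, hσc, hemb, -, hfix, rfl, -⟩ :=
    hsys.exists_reflection hab (X := {σ}) (by simpa using hσa) le_rfl hlt hcl
  have hσmem : σ ∈ (↑(({σ} : Finset Ordinal) ∪ {a}) : Set Ordinal) := by simp
  have hamem : a ∈ (↑(({σ} : Finset Ordinal) ∪ {a}) : Set Ordinal) := by simp
  have hsum : σ + (h a - σ) = h a :=
    Ordinal.add_sub_cancel_of_le (hσc σ (Finset.mem_singleton_self σ)).le
  have hξ : h a - σ < ρ := (add_lt_add_iff_left σ).1 (by rw [hsum]; exact hca.trans_le haσ)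
  have hback := (hemb.2 σ hσmem a hamem _ hξ).2
  rw [hfix (Finset.mem_singleton_self σ), id, fApp_of_dvd hσ, hsum] at hback
  exact hca.ne (hback rfl)

theorem isLimitMul_left_of_lt2 (hsys : R2System ρ le1 le2) (hρ : ρ ≠ 0) {a b : Ordinal}
    (hab : le2 a b) (hlt : a < b) : IsLimitMul ρ a :=
  isLimitMul_of_exists_dvd_between hρ (hsys.ne_zero_of_lt2 hρ hab hlt) fun a' ha' =>
    ⟨ρ * Order.succ (a' / ρ), lt_mul_succ_div a' hρ,
      (mul_succ ρ _).symm ▸ hsys.add_lt_of_lt2 hρ hab hlt (dvd_mul_right _ _)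
        ((mul_div_le a' ρ).trans_lt ha'),
      dvd_mul_right _ _⟩

theorem isLimitMul_right_of_lt2 (hsys : R2System ρ le1 le2) (hρ : ρ ≠ 0) {a b : Ordinal}
    (hab : le2 a b) (hlt : a < b) : IsLimitMul ρ b := by
  obtain ⟨-, hcofinal, -⟩ := (hsys.2 a b).1 hab
  have ha := hsys.isLimitMul_left_of_lt2 hρ hab hlt
  have ha0 := pos_iff_ne_zero.2 (hsys.ne_zero_of_lt2 hρ hab hlt)
  have hcov := hcofinal ∅ {0} (by simp) (by simpa using ha0)
    (rclosed_of_forall_dvd hρ (by simp)) (rclosed_of_forall_dvd hρ (by simp)) (by simp)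
    fun a' ha' => by
      obtain ⟨σ, ha'σ, hσa, hσ⟩ := ha.exists_dvd_between hρ ha'
      exact ⟨{σ}, by simpa using ⟨ha'σ, hσa⟩,
        by simpa using hsys.isCovering_singleton (dvd_zero ρ) hσ⟩
  refine isLimitMul_of_exists_dvd_between hρ (pos_of_gt hlt).ne' fun b' hb' => ?_
  obtain ⟨Yt, hYt, h, hemb, -, himg⟩ := hcov b' hb'
  have h0mem : (0 : Ordinal) ∈ (↑((∅ : Finset Ordinal) ∪ {0}) : Set Ordinal) := by simp
  have h0 : h 0 ∈ Yt := by
    have := mem_image_of_mem h h0mem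
    rwa [himg, Finset.empty_union, Finset.mem_coe] at this
  refine ⟨h 0, (hYt _ h0).1, (hYt _ h0).2, fApp_zero_eq_self_iff.1 ?_⟩
  exact (hemb.2 0 h0mem 0 h0mem 0 (pos_iff_ne_zero.2 hρ)).1 (fApp_zero_eq_self_iff.2 (dvd_zero ρ))

theorem exists_le1_between_of_lt2 (hsys : R2System ρ le1 le2) (hρ : ρ ≠ 0) {a b g : Ordinal}
    (hab : le2 a b) (hlt : a < b) (hg : g < a) : ∃ c, g < c ∧ c < a ∧ le1 c a := by
  have ha := (hsys.isLimitMul_left_of_lt2 hρ hab hlt).dvd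
  have hcl : RClosed ρ ↑(({ρ * (g / ρ), g} : Finset Ordinal) ∪ {a}) := by
    refine rclosed_of_forall_dvd_or_floor_mem hρ fun z hz => ?_
    simp only [Finset.coe_union, Finset.coe_insert, Finset.coe_singleton, mem_union,
      mem_insert_iff, mem_singleton_iff] at hz ⊢
    rcases hz with (rfl | rfl) | rfl
    · exact Or.inl (dvd_mul_right _ _)
    · exact Or.inr (Or.inl (Or.inl rfl))
    · exact Or.inl ha
  obtain ⟨c, -, hca, hXc, -, -, -, -, hle1⟩ := hsys.exists_reflection hab
    (by simpa using ⟨(mul_div_le g ρ).trans_lt hg, hg⟩) le_rfl hlt hcl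
  exact ⟨c, hXc g (by simp), hca, hle1 (hsys.le1_of_le2 hab)⟩

theorem exists_lt2_dvd_between (hsys : R2System ρ le1 le2) (hρ : ρ ≠ 0) {a b c x : Ordinal}
    (hab : le2 a b) (hltab : a < b) (hbc : le2 b c) (hltbc : b < c) (hx : x < b) :
    ∃ d, x < d ∧ a < d ∧ d < b ∧ ρ ∣ d ∧ le2 a d := by
  have ha := (hsys.isLimitMul_left_of_lt2 hρ hab hltab).dvd
  have hb := hsys.isLimitMul_left_of_lt2 hρ hbc hltbc
  obtain ⟨y, hxy, hyb, hy⟩ := hb.exists_dvd_between hρ (max_lt hx hltab)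
  have hcl : RClosed ρ ↑(({a, y} : Finset Ordinal) ∪ {b}) := by
    refine rclosed_of_forall_dvd hρ fun z hz => ?_
    simp only [Finset.coe_union, Finset.coe_insert, Finset.coe_singleton, mem_union,
      mem_insert_iff, mem_singleton_iff] at hz
    rcases hz with (rfl | rfl) | rfl
    exacts [ha, hy, hb.dvd]
  obtain ⟨d, h, hdb, hXd, hemb, hpres, hfix, rfl, -⟩ := hsys.exists_reflection hbc (X := {a, y})
    (by simpa using ⟨hltab, hyb⟩) le_rfl hltbc hcl
  have hamem : a ∈ (↑(({a, y} : Finset Ordinal) ∪ {b}) : Set Ordinal) := by simp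
  have hbmem : b ∈ (↑(({a, y} : Finset Ordinal) ∪ {b}) : Set Ordinal) := by simp
  have hya : y < h b := hXd y (by simp)
  refine ⟨h b, (le_max_left x a).trans_lt (hxy.trans hya), (le_max_right x a).trans_lt
    (hxy.trans hya), hdb, fApp_zero_eq_self_iff.1 ?_, ?_⟩
  · exact (hemb.2 b hbmem b hbmem 0 (pos_iff_ne_zero.2 hρ)).1 (fApp_zero_eq_self_iff.2 hb.dvd)
  · simpa [hfix (by simp : a ∈ ({a, y} : Finset Ordinal))] using (hpres a hamem b hbmem).2 hab

theorem exists_lt2_between_of_lt2_of_lt2 (hsys : R2System ρ le1 le2) (hρ : ρ ≠ 0)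
    {a b c g : Ordinal} (hab : le2 a b) (hltab : a < b) (hbc : le2 b c) (hltbc : b < c)
    (hg : g < c) : ∃ δ, g < δ ∧ δ < c ∧ le2 a δ ∧ a < δ := by
  have ha := (hsys.isLimitMul_left_of_lt2 hρ hab hltab).dvd
  obtain ⟨y, -, hay, hyb, hy, hay2⟩ := hsys.exists_lt2_dvd_between hρ hab hltab hbc hltbc hltab
  obtain ⟨-, hcofinal, -⟩ := (hsys.2 b c).1 hbc
  have hcov := hcofinal {a} {y} (by simpa using hltab) (by simpa using hyb)
    (rclosed_of_forall_dvd hρ (by simpa using ha)) (rclosed_of_forall_dvd hρ (by simpa using hy))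
    (by simpa using hay) fun b' hb' => by
      obtain ⟨d, hb'd, had, hdb, hd, had2⟩ :=
        hsys.exists_lt2_dvd_between hρ hab hltab hbc hltbc hb'
      exact ⟨{d}, by simpa using ⟨hb'd, hdb⟩, hsys.isCovering_pair ha hy hd hay had had2⟩
  obtain ⟨Yt, hYt, h, hemb, hpres, himg⟩ := hcov (max g a) (max_lt hg (hltab.trans hltbc))
  obtain ⟨rfl, hfix⟩ := Finset.eq_singleton_and_eqOn_id_of_image_union_singleton
    (by simpa using hay) (fun x hx z hz => by
      simpa [Finset.mem_singleton.1 hx] using (le_max_right g a).trans_lt (hYt z hz).1)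
    (fun _ hσ _ hτ => hemb.1 _ hσ _ hτ) himg
  have hδ := hYt (h y) (Finset.mem_singleton_self _)
  refine ⟨h y, (le_max_left g a).trans_lt hδ.1, hδ.2, ?_, (le_max_right g a).trans_lt hδ.1⟩
  simpa [hfix (Finset.mem_singleton_self a)] using (hpres a (by simp) y (by simp)).2 hay2

end R2System

theorem lt2_structure
    (ρ : Ordinal) (hρ : AddIndec ρ)
    (le1 le2 : Ordinal → Ordinal → Prop) (hsys : R2System ρ le1 le2)
    :
    (∀ α β : Ordinal, le2 α β → α ≠ β →
      (∃ l : Ordinal, β = ρ * l ∧ Order.IsSuccLimit l) ∧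
      (∀ γ' < α, ∃ γ, γ' < γ ∧ γ < α ∧ le1 γ α)) ∧
    (∀ α β γ : Ordinal, le2 α β → α ≠ β → le2 β γ → β ≠ γ →
      ∀ γ' < γ, ∃ δ, γ' < δ ∧ δ < γ ∧ le2 α δ ∧ α ≠ δ) := by
  have hρ0 : ρ ≠ 0 := hρ.1
  refine ⟨fun α β hαβ hne => ?_, fun α β γ hαβ hne₁ hβγ hne₂ γ' hγ' => ?_⟩
  · have hlt := (hsys.le_of_le2 hαβ).lt_of_ne hne
    exact ⟨hsys.isLimitMul_right_of_lt2 hρ0 hαβ hlt,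
      fun _ => hsys.exists_le1_between_of_lt2 hρ0 hαβ hlt⟩
  · obtain ⟨δ, hγ'δ, hδγ, hαδ, hlt⟩ := hsys.exists_lt2_between_of_lt2_of_lt2 hρ0 hαβ
      ((hsys.le_of_le2 hαβ).lt_of_ne hne₁) hβγ ((hsys.le_of_le2 hβγ).lt_of_ne hne₂) hγ'
    exact ⟨δ, hγ'δ, hδγ, hαδ, hlt.ne⟩
end

section
/- (1) For k ∈ {1, 2} and ordinals 0 < α < β: if for all α' < α and β' < β there exist α'' with α' < α'' ≤ α and β'' with β' < β'' ≤ β such that α'' ≤_k β'', then α ≤_k β. (2) For every ordinal α, the class {β : α ≤₁ β} is a topologically closed interval of ordinals. (3) For every ordinal α, the class {β : α ≤₂ β} is topologically closed. (4) For every ordinal β and k = 1, 2, the set {α : α ≤_k β} is topologically closed. -/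
open Ordinal Set

/-!
Part (1) is a compactness argument: an instance of the defining condition of `α ≤ₖ β` mentions
only finitely many ordinals, so it already lies inside some approximating pair `α'' ≤ₖ β''`,
whose condition then answers it. For `≤₂` this needs two properties of `≤₁`: it is transitive,
and if `α'' ≤₁ α` then cofinally many coverings below `α` give cofinally many below `α''`.
Both come from the covering property of `≤₁` applied after adding the `R^ρ`-closure
`{ρ·(γ/ρ), γ}` of a point `γ` to the fixed part, which pushes the new points above `γ`.
Parts (2)–(4) are the cases of (1) in which one of the approximating sequences is constant.
-/

theorem exists_bound_lt {S : Finset Ordinal} {c : Ordinal} (hS : ∀ s ∈ S, s < c) (hc : 0 < c) :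
    ∃ b < c, ∀ s ∈ S, s ≤ b :=
  ⟨S.sup id, (Finset.sup_lt_iff hc).2 hS, fun _ hs => Finset.le_sup (f := id) hs⟩

theorem nth_mem {Y : Finset Ordinal} {i : ℕ} (hi : i < Y.card) : nth Y i ∈ Y := by
  have hlen : i < (Y.sort (· ≤ ·)).length := by rwa [Finset.length_sort]
  rw [nth, List.getD_eq_getElem _ _ hlen]
  exact (Finset.mem_sort _).1 (List.getElem_mem hlen)

section Closed

variable {ρ : Ordinal}

theorem mul_div_mul_add (hρ0 : ρ ≠ 0) {ζ ξ : Ordinal} (hξ : ξ < ρ) :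
    ρ * ((ρ * ζ + ξ) / ρ) = ρ * ζ := by
  rw [Ordinal.mul_add_div _ hρ0, Ordinal.div_eq_zero_of_lt hξ, add_zero]

theorem fApp_zero (ρ α : Ordinal) : fApp ρ 0 α = ρ * (α / ρ) := by
  unfold fApp
  split_ifs with h
  · conv_lhs => rw [← Ordinal.div_add_mod α ρ, h]
    simp only [add_zero]
  · rfl

theorem rClosed_union {S T : Set Ordinal} (hS : RClosed ρ S) (hT : RClosed ρ T) :
    RClosed ρ (S ∪ T) := fun σ ξ hσ hξ =>
  Or.imp (hS σ ξ hσ hξ) (hT σ ξ hσ hξ)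

theorem rClosed_mul_div_mem (hρ0 : ρ ≠ 0) {S : Set Ordinal} (hS : RClosed ρ S) {α : Ordinal}
    (hα : α ∈ S) : ρ * (α / ρ) ∈ S :=
  hS _ _ ⟨_, rfl⟩ (Ordinal.mod_lt α hρ0) ((Ordinal.div_add_mod α ρ).symm ▸ hα)

theorem rClosed_pair_mul_div (hρ0 : ρ ≠ 0) (γ : Ordinal) :
    RClosed ρ {ρ * (γ / ρ), γ} := by
  rintro _ ξ ⟨ζ, rfl⟩ hξ hmem
  have hζ : ρ * ζ = ρ * ((ρ * ζ + ξ) / ρ) := (mul_div_mul_add hρ0 hξ).symm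
  rcases hmem with h | h <;> rw [h] at hζ
  · rw [Ordinal.mul_div_cancel _ hρ0] at hζ
    exact Or.inl hζ
  · exact Or.inl hζ

theorem rClosed_image (hρ0 : ρ ≠ 0) {Z : Set Ordinal} {h : Ordinal → Ordinal}
    (hZ : RClosed ρ Z) (he : IsEmbed ρ Z h) : RClosed ρ (h '' Z) := by
  rintro _ ξ ⟨ζ, rfl⟩ hξ ⟨τ, hτ, hhτ⟩
  have hτ₀ := rClosed_mul_div_mem hρ0 hZ hτ
  refine ⟨_, hτ₀, ?_⟩
  rw [← (he.2 τ hτ _ hτ₀ 0 (pos_iff_ne_zero.2 hρ0)).1 (fApp_zero ρ τ),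
    fApp_zero, hhτ, mul_div_mul_add hρ0 hξ]

end Closed

section Covering

variable {ρ : Ordinal} {le1 le2 : Ordinal → Ordinal → Prop}

theorem isCovering_refl (Z : Set Ordinal) : IsCovering ρ le1 le2 Z Z :=
  ⟨id, ⟨fun _ _ _ _ h => h, fun _ _ _ _ _ _ => Iff.rfl⟩, fun _ _ _ _ => ⟨id, id⟩, Set.image_id Z⟩

theorem IsCovering.trans {Z W V : Set Ordinal} (h₁ : IsCovering ρ le1 le2 Z W)
    (h₂ : IsCovering ρ le1 le2 W V) : IsCovering ρ le1 le2 Z V := by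
  obtain ⟨g, ⟨gm, gf⟩, gp, rfl⟩ := h₁
  obtain ⟨k, ⟨km, kf⟩, kp, rfl⟩ := h₂
  have hg : ∀ a ∈ Z, g a ∈ g '' Z := fun a ha => Set.mem_image_of_mem g ha
  refine ⟨k ∘ g, ⟨fun a ha b hb hab => km _ (hg a ha) _ (hg b hb) (gm a ha b hb hab),
    fun a ha b hb ξ hξ => (gf a ha b hb ξ hξ).trans (kf _ (hg a ha) _ (hg b hb) ξ hξ)⟩,
    fun a ha b hb => ⟨fun h => (kp _ (hg a ha) _ (hg b hb)).1 ((gp a ha b hb).1 h),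
      fun h => (kp _ (hg a ha) _ (hg b hb)).2 ((gp a ha b hb).2 h)⟩, Set.image_comp k g Z⟩

theorem IsCovering.rClosed (hρ0 : ρ ≠ 0) {Z W : Set Ordinal} (hc : IsCovering ρ le1 le2 Z W)
    (hZ : RClosed ρ Z) : RClosed ρ W := by
  obtain ⟨h, he, -, rfl⟩ := hc
  exact rClosed_image hρ0 hZ he

theorem eqOn_of_image_union_eq {A B C : Set Ordinal} {h : Ordinal → Ordinal}
    (hm : StrictMonoOn h (A ∪ B)) (hi : h '' (A ∪ B) = A ∪ C)
    (hAB : ∀ a ∈ A, ∀ b ∈ B, a < b) (hAC : ∀ a ∈ A, ∀ c ∈ C, a < c) :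
    Set.EqOn h id A := by
  intro a
  induction a using WellFoundedLT.induction with
  | _ a ih =>
  intro ha
  have hleft {w : Ordinal} (hw : w ∈ A ∪ C) (hwa : w < a) : w ∈ A :=
    hw.resolve_right fun hwC => (hAC a ha w hwC).not_gt hwa
  obtain ⟨z, hz, hza⟩ : a ∈ h '' (A ∪ B) := hi ▸ Or.inl ha
  have hle : h a ≤ a := by
    refine hza ▸ (hm.le_iff_le (Or.inl ha) hz).2 (le_of_not_gt fun hz' => ?_)
    have hzA : z ∈ A := hz.resolve_right fun hzB => (hAB a ha z hzB).not_gt hz'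
    exact hz'.ne ((ih z hz' hzA).symm.trans hza)
  refine hle.antisymm (le_of_not_gt fun hlt => hlt.ne ?_)
  have hhaA := hleft (hi ▸ Set.mem_image_of_mem h (Or.inl ha)) hlt
  exact hm.injOn (Or.inl hhaA) (Or.inl ha) (ih _ hlt hhaA)

theorem IsCovering.restrict {A B C S : Finset Ordinal} (hS : S ⊆ A)
    (hAB : ∀ a ∈ A, ∀ b ∈ B, a < b) (hAC : ∀ a ∈ A, ∀ c ∈ C, a < c)
    (hc : IsCovering ρ le1 le2 ↑(A ∪ B) ↑(A ∪ C)) :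
    IsCovering ρ le1 le2 ↑(S ∪ B) ↑(S ∪ C) := by
  obtain ⟨h, ⟨hm, hf⟩, hp, hi⟩ := hc
  simp only [Finset.coe_union] at hi hm hf hp ⊢
  have hm' : StrictMonoOn h (↑A ∪ ↑B) := fun a ha b hb => hm a ha b hb
  have hfix := eqOn_of_image_union_eq hm' hi hAB hAC
  have hBC : h '' ↑B = ↑C := by
    have hBA : (↑A : Set Ordinal) ∩ h '' ↑B ⊆ ∅ := by
      rintro _ ⟨hA, b, hb, rfl⟩
      exact (hAB _ hA b hb).ne (hm'.injOn (Or.inl hA) (Or.inr hb) (hfix hA))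
    have hCA : (↑A : Set Ordinal) ∩ ↑C ⊆ ∅ := fun c ⟨hA, hC⟩ => (hAC c hA c hC).ne rfl
    rw [Set.image_union, hfix.image_eq_self] at hi
    rw [← Set.union_sdiff_cancel_left hBA, hi, Set.union_sdiff_cancel_left hCA]
  have hsub : (↑S : Set Ordinal) ∪ ↑B ⊆ ↑A ∪ ↑B := Set.union_subset_union_left _ hS
  refine ⟨h, ⟨fun a ha b hb => hm a (hsub ha) b (hsub hb),
    fun a ha b hb => hf a (hsub ha) b (hsub hb)⟩,
    fun a ha b hb => hp a (hsub ha) b (hsub hb), ?_⟩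
  rw [Set.image_union, hBC, (hfix.mono hS).image_eq_self]

end Covering

/-- The hypothesis of part (1). -/
def ApproachedBy (R : Ordinal → Ordinal → Prop) (α β : Ordinal) : Prop :=
  ∀ α' < α, ∀ β' < β, ∃ α'' β'' : Ordinal,
    α' < α'' ∧ α'' ≤ α ∧ β' < β'' ∧ β'' ≤ β ∧ R α'' β''

section Approach

variable {R : Ordinal → Ordinal → Prop}

theorem exists_approx_of_approachedBy {α β : Ordinal} (H : ApproachedBy R α β) (h0 : 0 < α)
    (hαβ : α < β) {S : Finset Ordinal} (hS : ∀ s ∈ S, s < α) {β' : Ordinal} (hβ' : β' < β) :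
    ∃ α'' β'', (∀ s ∈ S, s < α'') ∧ α'' ≤ α ∧ β' < β'' ∧ α < β'' ∧ β'' ≤ β ∧ R α'' β'' := by
  obtain ⟨α', hα', hSα'⟩ := exists_bound_lt hS h0
  obtain ⟨α'', β'', h₁, h₂, h₃, h₄, hR⟩ := H α' hα' (max β' α) (max_lt hβ' hαβ)
  exact ⟨α'', β'', fun s hs => (hSα' s hs).trans_lt h₁, h₂, (le_max_left _ _).trans_lt h₃,
    (le_max_right _ _).trans_lt h₃, h₄, hR⟩

theorem topClosed_setOf_rel_left (hle : ∀ a b, R a b → a ≤ b) (hzero : ∀ b, R 0 b → b = 0)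
    (hlim : ∀ α β, 0 < α → α < β → ApproachedBy R α β → R α β) (α : Ordinal) :
    TopClosed {β | R α β} := by
  rintro l ⟨hl0, hl⟩
  obtain ⟨δ, hδ, hδ0, hδl⟩ := hl 0 (pos_iff_ne_zero.2 hl0)
  have hα0 : 0 < α := pos_iff_ne_zero.2 fun hα => hδ0.ne' (hzero δ (hα ▸ hδ))
  refine hlim α l hα0 ((hle _ _ hδ).trans_lt hδl) fun α' hα' β' hβ' => ?_
  obtain ⟨δ', hδ', hβ'δ', hδ'l⟩ := hl β' hβ'
  exact ⟨α, δ', hα', le_rfl, hβ'δ', hδ'l.le, hδ'⟩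

theorem topClosed_setOf_rel_right (hle : ∀ a b, R a b → a ≤ b) (hrefl : ∀ a, R a a)
    (hlim : ∀ α β, 0 < α → α < β → ApproachedBy R α β → R α β) (β : Ordinal) :
    TopClosed {α | R α β} := by
  rintro l ⟨hl0, hl⟩
  have hlβ : l ≤ β := le_of_not_gt fun hβl => by
    obtain ⟨δ, hδ, hβδ, -⟩ := hl β hβl
    exact hβδ.not_ge (hle _ _ hδ)
  rcases hlβ.eq_or_lt with rfl | hlβ
  · exact hrefl l
  refine hlim l β (pos_iff_ne_zero.2 hl0) hlβ fun α' hα' β' hβ' => ?_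
  obtain ⟨δ, hδ, hα'δ, hδl⟩ := hl α' hα'
  exact ⟨δ, β, hα'δ, hδl.le, hβ', le_rfl, hδ⟩

end Approach

namespace R2System

variable {ρ : Ordinal} {le1 le2 : Ordinal → Ordinal → Prop}

theorem le1_of_le1_of_le_of_le (hsys : R2System ρ le1 le2) {a b c : Ordinal} (h : le1 a b) (hac : a ≤ c) (hcb : c ≤ b) :
    le1 a c :=
  (hsys.1 a c).2 ⟨hac, fun X Y hX hY hcl =>
    ((hsys.1 a b).1 h).2 X Y hX (fun y hy => ⟨(hY y hy).1, (hY y hy).2.trans_le hcb⟩) hcl⟩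

theorem eq_zero_of_le1_zero (hsys : R2System ρ le1 le2) {β : Ordinal} (h : le1 0 β) : β = 0 := by
  by_contra hβ
  obtain ⟨Yt, hYt, -, g, -, -, hg⟩ := ((hsys.1 0 β).1 h).2 ∅ {0} (by simp)
    (by simpa using pos_iff_ne_zero.2 hβ)
    (fun σ ξ _ _ hσξ => by simp_all [Ordinal.add_eq_zero_iff])
  have : g 0 ∈ g '' ↑(∅ ∪ {0} : Finset Ordinal) := Set.mem_image_of_mem g (by simp)
  rw [hg] at this
  exact (hYt _ (by simpa using this)).not_ge bot_le

theorem exists_cover_above (hsys : R2System ρ le1 le2) (hρ0 : ρ ≠ 0) {a b γ : Ordinal}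
    (h : le1 a b) (hγ : γ < a) {X Y : Finset Ordinal} (hX : ∀ x ∈ X, x < a)
    (hY : ∀ y ∈ Y, a ≤ y ∧ y < b) (hcl : RClosed ρ ↑(X ∪ Y)) :
    ∃ Yt : Finset Ordinal, (∀ y ∈ Yt, γ < y ∧ y < a) ∧ (∀ x ∈ X, ∀ y ∈ Yt, x < y) ∧
      IsCovering ρ le1 le2 ↑(X ∪ Y) ↑(X ∪ Yt) := by
  set G : Finset Ordinal := {ρ * (γ / ρ), γ}
  have hXG : ∀ z ∈ X ∪ G, z < a := by
    simp only [G, Finset.mem_union, Finset.mem_insert, Finset.mem_singleton]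
    rintro z (hz | rfl | rfl)
    exacts [hX z hz, (Ordinal.mul_div_le γ ρ).trans_lt hγ, hγ]
  have hclG : RClosed ρ ↑(X ∪ G ∪ Y) := by
    rw [Finset.union_right_comm, Finset.coe_union]
    exact rClosed_union hcl (by simpa [G] using rClosed_pair_mul_div hρ0 γ)
  obtain ⟨Yt, hYt, hXGYt, hc⟩ := ((hsys.1 a b).1 h).2 (X ∪ G) Y hXG hY hclG
  refine ⟨Yt, fun y hy => ⟨hXGYt γ (by simp [G]) y hy, hYt y hy⟩,
    fun x hx => hXGYt x (Finset.mem_union_left G hx), ?_⟩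
  exact hc.restrict Finset.subset_union_left (fun z hz y hy => (hXG z hz).trans_le (hY y hy).1)
    hXGYt

theorem le1_trans (hsys : R2System ρ le1 le2) (hρ0 : ρ ≠ 0) {a b c : Ordinal}
    (hab : le1 a b) (hbc : le1 b c) : le1 a c := by
  rcases (hsys.le_of_le1 hab).eq_or_lt with rfl | hlt
  · exact hbc
  refine (hsys.1 a c).2
    ⟨(hsys.le_of_le1 hab).trans (hsys.le_of_le1 hbc), fun X Y hX hY hcl => ?_⟩
  set Y₁ := Y.filter (· < b)
  set Y₂ := Y.filter (¬ · < b)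
  have hXY : X ∪ Y = X ∪ Y₁ ∪ Y₂ := by
    ext; simp only [Y₁, Y₂, Finset.mem_union, Finset.mem_filter]; tauto
  have hXY₁ : ∀ z ∈ X ∪ Y₁, z < b := by
    simp only [Y₁, Finset.mem_union, Finset.mem_filter]
    rintro z (hz | ⟨-, hz⟩)
    exacts [(hX z hz).trans hlt, hz]
  have hY₂ : ∀ y ∈ Y₂, b ≤ y ∧ y < c := fun y hy =>
    ⟨not_lt.1 (Finset.mem_filter.1 hy).2, (hY y (Finset.mem_filter.1 hy).1).2⟩
  rw [hXY] at hcl ⊢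
  obtain ⟨Y₃, hY₃, -, hc₃⟩ := hsys.exists_cover_above hρ0 hbc hlt hXY₁ hY₂ hcl
  have hcl₃ := hc₃.rClosed hρ0 hcl
  rw [Finset.union_assoc X Y₁ Y₃] at hc₃ hcl₃
  have hY₁₃ : ∀ y ∈ Y₁ ∪ Y₃, a ≤ y ∧ y < b := by
    simp only [Y₁, Finset.mem_union, Finset.mem_filter]
    rintro y (⟨hy, hyb⟩ | hy)
    exacts [⟨(hY y hy).1, hyb⟩, ⟨(hY₃ y hy).1.le, (hY₃ y hy).2⟩]
  obtain ⟨Y₄, hY₄, hXY₄, hc₄⟩ := ((hsys.1 a b).1 hab).2 X (Y₁ ∪ Y₃) hX hY₁₃ hcl₃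
  exact ⟨Y₄, hY₄, hXY₄, hc₃.trans hc₄⟩

theorem cofinally_of_le1 (hsys : R2System ρ le1 le2) (hρ0 : ρ ≠ 0) {a b : Ordinal}
    (h : le1 a b) {X Y : Finset Ordinal} (hX : ∀ x ∈ X, x < a) (hcl : RClosed ρ ↑(X ∪ Y))
    (hcof : Cofinally b fun Yt => IsCovering ρ le1 le2 ↑(X ∪ Y) ↑(X ∪ Yt)) :
    Cofinally a fun Yt => IsCovering ρ le1 le2 ↑(X ∪ Y) ↑(X ∪ Yt) := by
  rcases (hsys.le_of_le1 h).eq_or_lt with rfl | hab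
  · exact hcof
  intro γ hγ
  obtain ⟨Y₁, hY₁, hc₁⟩ := hcof a hab
  obtain ⟨Y₂, hY₂, -, hc₂⟩ := hsys.exists_cover_above hρ0 h hγ hX
    (fun y hy => ⟨(hY₁ y hy).1.le, (hY₁ y hy).2⟩) (hc₁.rClosed hρ0 hcl)
  exact ⟨Y₂, hY₂, hc₁.trans hc₂⟩

theorem le1_of_approachedBy (hsys : R2System ρ le1 le2) {α β : Ordinal} (h0 : 0 < α)
    (hαβ : α < β) (H : ApproachedBy le1 α β) : le1 α β := by
  refine (hsys.1 α β).2 ⟨hαβ.le, fun X Y hX hY hcl => ?_⟩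
  obtain ⟨β', hβ', hYβ'⟩ := exists_bound_lt (fun y hy => (hY y hy).2) (h0.trans hαβ)
  obtain ⟨α'', β'', hXα'', hα'', hβ'', -, -, hle⟩ :=
    exists_approx_of_approachedBy H h0 hαβ hX hβ'
  obtain ⟨Yt, hYt, hXYt, hc⟩ := ((hsys.1 α'' β'').1 hle).2 X Y hXα''
    (fun y hy => ⟨hα''.trans (hY y hy).1, (hYβ' y hy).trans_lt hβ''⟩) hcl
  exact ⟨Yt, fun y hy => (hYt y hy).trans_le hα'', hXYt, hc⟩

theorem le2_of_approachedBy (hsys : R2System ρ le1 le2) (hρ0 : ρ ≠ 0) {α β : Ordinal}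
    (h0 : 0 < α) (hαβ : α < β) (H : ApproachedBy le2 α β) : le2 α β := by
  refine (hsys.2 α β).2 ⟨hαβ.le, ?_, ?_⟩
  · intro X Y hX hY hXc hYc hXY hcof β' hβ'
    have hXYα : ∀ z ∈ X ∪ Y, z < α := by
      simp only [Finset.mem_union]
      rintro z (hz | hz)
      exacts [hX z hz, hY z hz]
    obtain ⟨α'', β'', hXYα'', hα'', hβ'', hαβ'', hβ''β, hle⟩ :=
      exists_approx_of_approachedBy H h0 hαβ hXYα hβ'
    have hcl : RClosed ρ ↑(X ∪ Y) := by rw [Finset.coe_union]; exact rClosed_union hXc hYc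
    have hcof'' := hsys.cofinally_of_le1 hρ0
      (hsys.le1_of_le1_of_le_of_le (hsys.le1_of_le2 hle) hα'' hαβ''.le)
      (fun x hx => hXYα'' x (Finset.mem_union_left Y hx)) hcl hcof
    obtain ⟨Yt, hYt, hc⟩ := ((hsys.2 α'' β'').1 hle).2.1 X Y
      (fun x hx => hXYα'' x (Finset.mem_union_left Y hx))
      (fun y hy => hXYα'' y (Finset.mem_union_right X hy)) hXc hYc hXY hcof'' β' hβ''
    exact ⟨Yt, fun y hy => ⟨(hYt y hy).1, (hYt y hy).2.trans_le hβ''β⟩, hc⟩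
  · intro X Y hX hY hcl
    obtain ⟨β', hβ', hYβ'⟩ := exists_bound_lt (fun y hy => (hY y hy).2) (h0.trans hαβ)
    obtain ⟨α'', β'', hXα'', hα'', hβ'', hαβ'', hβ''β, hle⟩ :=
      exists_approx_of_approachedBy H h0 hαβ hX hβ'
    obtain ⟨Yt, hYt, hXYt, hc, hnth⟩ := ((hsys.2 α'' β'').1 hle).2.2 X Y hXα''
      (fun y hy => ⟨hα''.trans (hY y hy).1, (hYβ' y hy).trans_lt hβ''⟩) hcl
    refine ⟨Yt, fun y hy => (hYt y hy).trans_le hα'', hXYt, hc, fun i hi hYi => ?_⟩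
    have hYi'' : le1 (nth Y i) β'' := hsys.le1_of_le1_of_le_of_le hYi
      ((hYβ' _ (nth_mem hi)).trans hβ''.le) hβ''β
    have hYti := hnth i hi hYi''
    -- `nth Yt i ≤₁ α'' ≤₁ β''`, and `α` lies between `nth Yt i` and `β''`
    exact hsys.le1_of_le1_of_le_of_le (hsys.le1_trans hρ0 hYti (hsys.le1_of_le2 hle))
      ((hsys.le_of_le1 hYti).trans hα'') hαβ''.le

end R2System

theorem limit_lemmas
    (ρ : Ordinal) (hρ : AddIndec ρ)
    (le1 le2 : Ordinal → Ordinal → Prop) (hsys : R2System ρ le1 le2)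
    :
    (∀ α β : Ordinal, 0 < α → α < β →
      (∀ α' < α, ∀ β' < β, ∃ α'' β'' : Ordinal,
        α' < α'' ∧ α'' ≤ α ∧ β' < β'' ∧ β'' ≤ β ∧ le1 α'' β'') →
      le1 α β) ∧
    (∀ α β : Ordinal, 0 < α → α < β →
      (∀ α' < α, ∀ β' < β, ∃ α'' β'' : Ordinal,
        α' < α'' ∧ α'' ≤ α ∧ β' < β'' ∧ β'' ≤ β ∧ le2 α'' β'') →
      le2 α β) ∧
    (∀ α : Ordinal, TopClosed {β | le1 α β} ∧ IsInterval {β | le1 α β}) ∧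
    (∀ α : Ordinal, TopClosed {β | le2 α β}) ∧
    (∀ β : Ordinal, TopClosed {a | le1 a β} ∧ TopClosed {a | le2 a β}) := by
  have le1_lim : ∀ α β, 0 < α → α < β → ApproachedBy le1 α β → le1 α β :=
    fun _ _ => hsys.le1_of_approachedBy
  have le2_lim : ∀ α β, 0 < α → α < β → ApproachedBy le2 α β → le2 α β :=
    fun _ _ => hsys.le2_of_approachedBy hρ.1
  have le1_le : ∀ a b, le1 a b → a ≤ b := fun _ _ => hsys.le_of_le1
  have le2_le : ∀ a b, le2 a b → a ≤ b := fun _ _ => hsys.le_of_le2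
  refine ⟨le1_lim, le2_lim, fun α => ⟨?_, ?_⟩, ?_, fun β => ⟨?_, ?_⟩⟩
  · exact topClosed_setOf_rel_left le1_le (fun _ => hsys.eq_zero_of_le1_zero) le1_lim α
  · exact fun σ τ υ hσ hυ hστ hτυ =>
      hsys.le1_of_le1_of_le_of_le hυ ((hsys.le_of_le1 hσ).trans hστ) hτυ
  · exact topClosed_setOf_rel_left le2_le
      (fun _ h => hsys.eq_zero_of_le1_zero (hsys.le1_of_le2 h)) le2_lim
  · exact topClosed_setOf_rel_right le1_le hsys.le1_refl le1_lim β
  · exact topClosed_setOf_rel_right le2_le hsys.le2_refl le2_lim β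
end
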